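/- arXiv:2209.04668 — 2 statements merged into one kernel-verified Lean document; each statement's English description precedes it below -/
import Mathlib

section
/- Let G be a connected finite simple graph with normalized Laplacian 𝓛. If vertices a and b are strongly cospectral with respect to 𝓛, then a and b have the same degree in G. -/
open Matrix

/-- The normalized Laplacian `𝓛 = D^{-1/2}(D − A)D^{-1/2}` of a simple graph. -/
noncomputable def normLap {V : Type*} [Fintype V] [DecidableEq V]
    (G : SimpleGraph V) [DecidableRel G.Adj] : Matrix V V ℝ :=
  Matrix.diagonal (fun v => (Real.sqrt (G.degree v))⁻¹) *
    (Matrix.diagonal (fun v => (G.degree v : ℝ)) - G.adjMatrix ℝ) *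
    Matrix.diagonal (fun v => (Real.sqrt (G.degree v))⁻¹)

/-- The quantum walk transition matrix `U(t) = exp(i t 𝓛)`. -/
noncomputable def qwalk {V : Type*} [Fintype V] [DecidableEq V]
    (G : SimpleGraph V) [DecidableRel G.Adj] (t : ℝ) : Matrix V V ℂ :=
  NormedSpace.exp ((Complex.I * (t : ℂ)) • (normLap G).map Complex.ofReal)

/-- `θ` lies in the eigenvalue support of vertex `a` for the symmetric matrix `L`:
some eigenvector of `L` for `θ` has nonzero entry at `a`. -/
def inSupport {V : Type*} [Fintype V] (L : Matrix V V ℝ) (a : V) (θ : ℝ) : Prop :=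
  ∃ v : V → ℝ, v ≠ 0 ∧ L.mulVec v = θ • v ∧ v a ≠ 0

/-- Vertices `a` and `b` are strongly cospectral with respect to `L`. -/
def StronglyCospectral {V : Type*} [Fintype V] (L : Matrix V V ℝ) (a b : V) : Prop :=
  ∀ θ : ℝ, (∀ v : V → ℝ, L.mulVec v = θ • v → v a = v b) ∨
           (∀ v : V → ℝ, L.mulVec v = θ • v → v a = - v b)

/-- `θ` is in the positive eigenvalue support `S⁺` of strongly cospectral vertices `a, b`. -/
def Splus {V : Type*} [Fintype V] (L : Matrix V V ℝ) (a b : V) (θ : ℝ) : Prop :=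
  inSupport L a θ ∧ ∀ v : V → ℝ, L.mulVec v = θ • v → v a = v b

/-- `θ` is in the negative eigenvalue support `S⁻` of strongly cospectral vertices `a, b`. -/
def Sminus {V : Type*} [Fintype V] (L : Matrix V V ℝ) (a b : V) (θ : ℝ) : Prop :=
  inSupport L a θ ∧ ∀ v : V → ℝ, L.mulVec v = θ • v → v a = - v b

/-- Perfect state transfer from `a` to `b` at time `τ`. -/
noncomputable def PST {V : Type*} [Fintype V] [DecidableEq V]
    (G : SimpleGraph V) [DecidableRel G.Adj] (a b : V) (τ : ℝ) : Prop :=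
  ∃ γ : ℂ, ‖γ‖ = 1 ∧ (qwalk G τ).mulVec (Pi.single a 1) = γ • (Pi.single b 1 : V → ℂ)

/-- `m`: the lcm of the denominators of a finite set of rationals. -/
def mOf (T : Finset ℚ) : ℕ := T.lcm fun q => q.den

/-- `g`: the gcd of the integers `m·θ` for `θ ∈ T`. -/
def gOf (T : Finset ℚ) : ℤ := T.gcd fun q => ((mOf T : ℚ) * q).num

/-! The vector `√d` is an eigenvector of `𝓛` for `0`, so strong cospectrality gives
`√d(a) = ±√d(b)`; both entries are nonnegative, so they are equal. -/

theorem StronglyCospectral.eq_or_eq_neg {V : Type*} [Fintype V] {L : Matrix V V ℝ} {a b : V}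
    (hsc : StronglyCospectral L a b) {θ : ℝ} {v : V → ℝ} (hv : L *ᵥ v = θ • v) :
    v a = v b ∨ v a = -v b :=
  (hsc θ).imp (fun h => h v hv) (fun h => h v hv)

/-- `D^{-1/2} √d` is the indicator of the non-isolated vertices, which `D - A` kills because
every neighbour of a vertex is non-isolated. -/
theorem normLap_mulVec_sqrt_degree {V : Type*} [Fintype V] [DecidableEq V]
    (G : SimpleGraph V) [DecidableRel G.Adj] :
    normLap G *ᵥ (fun v => √(G.degree v : ℝ)) = 0 := by
  set u : V → ℝ := fun v => (√(G.degree v : ℝ))⁻¹ * √(G.degree v : ℝ)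
  have hu : ∀ v, G.degree v ≠ 0 → u v = 1 := fun v hv =>
    inv_mul_cancel₀ (Real.sqrt_ne_zero'.2 (by exact_mod_cast Nat.pos_of_ne_zero hv))
  have hdeg : ∀ v, (G.degree v : ℝ) * u v = G.degree v := by
    intro v
    by_cases hv : G.degree v = 0
    · simp [hv]
    · rw [hu v hv, mul_one]
  have hneighbors : ∀ v, ∑ w ∈ G.neighborFinset v, u w = G.degree v := by
    intro v
    rw [Finset.sum_congr rfl fun w hw => hu w ?_]
    · simp
    · exact (G.degree_pos_iff_exists_adj w).2 ⟨v, ((G.mem_neighborFinset v w).1 hw).symm⟩ |>.ne'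
  have hlap : (diagonal (fun v => (G.degree v : ℝ)) - G.adjMatrix ℝ) *ᵥ u = 0 := by
    funext v
    rw [sub_mulVec, Pi.sub_apply, mulVec_diagonal, G.adjMatrix_mulVec_apply, hdeg, hneighbors,
      sub_self, Pi.zero_apply]
  have hscale : diagonal (fun v => (√(G.degree v : ℝ))⁻¹) *ᵥ (fun v => √(G.degree v : ℝ)) = u :=
    funext fun v => mulVec_diagonal _ _ v
  rw [normLap, ← mulVec_mulVec, ← mulVec_mulVec, hscale, hlap, mulVec_zero]

theorem stronglyCospectral_same_degree_general {V : Type*} [Fintype V] [DecidableEq V]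
    (G : SimpleGraph V) [DecidableRel G.Adj]
    (a b : V)
    (hsc : StronglyCospectral (normLap G) a b) :
    G.degree a = G.degree b := by
  have hsqrt : √(G.degree a : ℝ) = √(G.degree b) := by
    have heig : normLap G *ᵥ (fun v => √(G.degree v : ℝ)) = (0 : ℝ) • fun v => √(G.degree v) := by
      rw [zero_smul, normLap_mulVec_sqrt_degree]
    rcases hsc.eq_or_eq_neg heig with h | h
    · exact h
    · have := Real.sqrt_nonneg (G.degree a)
      have := Real.sqrt_nonneg (G.degree b)
      linarith
  exact_mod_cast (Real.sqrt_inj (Nat.cast_nonneg _) (Nat.cast_nonneg _)).1 hsqrt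

/-- strongly cospectral vertices (w.r.t. the normalized Laplacian) of a
connected graph have the same degree. -/
theorem stronglyCospectral_same_degree {V : Type*} [Fintype V] [DecidableEq V]
    (G : SimpleGraph V) [DecidableRel G.Adj]
    (hG : G.Connected) (a b : V)
    (hsc : StronglyCospectral (normLap G) a b) :
    G.degree a = G.degree b :=
  stronglyCospectral_same_degree_general G a b hsc
end

section
/- Let G be a finite tree on at least two vertices with normalized Laplacian 𝓛, and suppose there is perfect state transfer between vertices a and b lying in different bipartite classes (i.e., the graph distance between a and b is odd). If the negative eigenvalue support of a and b is S⁻ = {2}, then G is the path on two vertices, i.e., G has exactly two vertices a and b joined by an edge. -/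
open Matrix

/-!
Perfect state transfer makes `a` and `b` strongly cospectral. Multiplying eigenvectors entrywise
by the bipartition sign `(-1) ^ dist a ·` maps the `θ`-eigenspace of `𝓛` onto the
`(2 - θ)`-eigenspace, and since `a` and `b` carry opposite signs it exchanges `S⁺` and `S⁻`.
So `S⁻ = {2}` confines the eigenvalue support of `a`, and hence of `b`, to `{0, 2}`, which gives
`𝓛 (𝓛 - 2) e_a = 0`, i.e. `N² e_a = e_a` for the normalized adjacency matrix `N = 1 - 𝓛`.
Since `(N²)ₓₐ > 0` whenever `x` shares a neighbour with `a`, no vertex lies at distance two from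
`a`, nor from `b`; in a connected graph with `a ≠ b` this leaves only the edge `ab`.
-/

open Polynomial

namespace Matrix

variable {n : Type*} [Fintype n] [DecidableEq n]

theorem pow_mulVec_of_mulVec_eq_smul {R : Type*} [CommSemiring R] {A : Matrix n n R}
    {v : n → R} {θ : R} (h : A *ᵥ v = θ • v) (k : ℕ) : (A ^ k) *ᵥ v = θ ^ k • v := by
  induction k with
  | zero => simp
  | succ k ih => rw [pow_succ, ← mulVec_mulVec, h, mulVec_smul, ih, smul_smul, pow_succ']

theorem aeval_mulVec_of_mulVec_eq_smul {R : Type*} [CommSemiring R] {A : Matrix n n R}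
    {v : n → R} {θ : R} (h : A *ᵥ v = θ • v) (p : R[X]) : aeval A p *ᵥ v = p.eval θ • v := by
  induction p using Polynomial.induction_on' with
  | add p q hp hq => rw [map_add, add_mulVec, hp, hq, eval_add, add_smul]
  | monomial k c =>
    rw [aeval_monomial, ← Algebra.smul_def, smul_mulVec, pow_mulVec_of_mulVec_eq_smul h,
      smul_smul, eval_monomial]

open scoped Norms.Operator in
theorem exp_mulVec_of_mulVec_eq_smul {𝕂 : Type*} [RCLike 𝕂] {A : Matrix n n 𝕂} {v : n → 𝕂}
    {c : 𝕂} (h : A *ᵥ v = c • v) : NormedSpace.exp A *ᵥ v = NormedSpace.exp c • v := by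
  have hA := (NormedSpace.exp_series_hasSum_exp' (𝕂 := 𝕂) A).mapL
    (LinearMap.toContinuousLinearMap (LinearMap.applyₗ v ∘ₗ toLin'.toLinearMap))
  have hc := (NormedSpace.exp_series_hasSum_exp' (𝕂 := 𝕂) c).smul_const v
  refine hA.unique (hc.congr_fun fun k => ?_)
  simp only [LinearMap.coe_toContinuousLinearMap', LinearMap.comp_apply, LinearEquiv.coe_coe,
    LinearMap.applyₗ_apply_apply, map_smul, toLin'_apply, smul_eq_mul,
    pow_mulVec_of_mulVec_eq_smul h, smul_smul]

theorem IsHermitian.aeval_mulVec_single_eq_zero {A : Matrix n n ℝ} (hA : A.IsHermitian) {a : n}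
    {p : ℝ[X]} (hp : ∀ θ, inSupport A a θ → p.eval θ = 0) :
    aeval A p *ᵥ Pi.single a 1 = 0 := by
  set B := hA.eigenvectorBasis
  have hsingle : (Pi.single a 1 : n → ℝ) = ∑ i, B i a • ⇑(B i) := by
    have := congrArg WithLp.ofLp (B.sum_repr' (EuclideanSpace.single a 1))
    simpa [EuclideanSpace.inner_single_right] using this.symm
  rw [hsingle, mulVec_sum]
  refine Finset.sum_eq_zero fun i _ => ?_
  rw [mulVec_smul, aeval_mulVec_of_mulVec_eq_smul (hA.mulVec_eigenvectorBasis i)]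
  by_cases hi : B i a = 0
  · simp [hi]
  · have hne : (⇑(B i) : n → ℝ) ≠ 0 := fun h0 => hi (by simp [h0])
    simp [hp _ ⟨_, hne, hA.mulVec_eigenvectorBasis i, hi⟩]

end Matrix

section StateTransfer

variable {n : Type*} [Fintype n]

theorem Matrix.IsSymm.cexp_mul_apply_eq_of_exp_mulVec_single [DecidableEq n] {L : Matrix n n ℝ}
    (hL : L.IsSymm) {τ : ℝ} {γ : ℂ} {a b : n}
    (hU : NormedSpace.exp ((Complex.I * τ) • L.map Complex.ofReal) *ᵥ Pi.single a 1 =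
      γ • Pi.single b 1)
    {θ : ℝ} {v : n → ℝ} (hv : L *ᵥ v = θ • v) :
    Complex.exp (Complex.I * τ * θ) * v a = γ * v b := by
  set M := (Complex.I * τ) • L.map Complex.ofReal
  set w : n → ℂ := fun x => v x
  have hLw : L.map Complex.ofReal *ᵥ w = (θ : ℂ) • w := by
    ext x
    exact (Complex.ofRealHom.map_mulVec L v x).symm.trans (by simp [hv, w])
  have hMw : M *ᵥ w = (Complex.I * τ * θ) • w := by
    rw [smul_mulVec, hLw, smul_smul]
  have hexpt : (NormedSpace.exp M)ᵀ = NormedSpace.exp M := by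
    rw [← exp_transpose, ((hL.map _).smul _).eq]
  calc Complex.exp (Complex.I * τ * θ) * v a
      = (NormedSpace.exp M *ᵥ w) ⬝ᵥ Pi.single a 1 := by
        rw [exp_mulVec_of_mulVec_eq_smul hMw, dotProduct_single, ← Complex.exp_eq_exp_ℂ]
        simp [w]
    _ = w ⬝ᵥ (NormedSpace.exp M *ᵥ Pi.single a 1) := by
        rw [dotProduct_mulVec, ← mulVec_transpose, hexpt]
    _ = γ * v b := by simp [hU, w]

theorem stronglyCospectral_of_phase {L : Matrix n n ℝ} {a b : n} (φ : ℝ → ℂ) {γ : ℂ}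
    (hφ : ∀ θ, ‖φ θ‖ = 1) (hγ : ‖γ‖ = 1)
    (h : ∀ θ v, L *ᵥ v = θ • v → φ θ * v a = γ * v b) : StronglyCospectral L a b := by
  intro θ
  have habs : ∀ v, L *ᵥ v = θ • v → |v a| = |v b| := fun v hv => by
    simpa [hφ, hγ] using congrArg norm (h θ v hv)
  by_cases hpos : ∃ v, L *ᵥ v = θ • v ∧ v a ≠ 0 ∧ v a = v b
  · obtain ⟨v, hv, hva, hvab⟩ := hpos
    left
    intro w hw
    have hcross : φ θ * (v a * w b) = φ θ * (w a * v b) := by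
      linear_combination (w b : ℂ) * h θ v hv - (v b : ℂ) * h θ w hw
    have : v a * w b = w a * v b := by
      exact_mod_cast mul_left_cancel₀ (norm_ne_zero_iff.1 (hφ θ ▸ one_ne_zero)) hcross
    rw [← hvab] at this
    exact (mul_left_cancel₀ hva (this.trans (mul_comm _ _))).symm
  · right
    intro w hw
    rcases abs_eq_abs.1 (habs w hw) with hab | hab
    · by_cases hwa : w a = 0
      · linarith
      · exact absurd ⟨w, hw, hwa, hab⟩ hpos
    · exact hab

theorem StronglyCospectral.inSupport_of_inSupport_right {L : Matrix n n ℝ} {a b : n}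
    (hsc : StronglyCospectral L a b) {θ : ℝ} (h : inSupport L b θ) : inSupport L a θ := by
  obtain ⟨v, hv0, hv, hvb⟩ := h
  refine ⟨v, hv0, hv, ?_⟩
  rcases hsc θ with hplus | hminus
  · rwa [hplus v hv]
  · rwa [hminus v hv, neg_ne_zero]

end StateTransfer

section Graph

variable {V : Type*} {G : SimpleGraph V}

theorem SimpleGraph.IsTree.neg_one_pow_dist_of_adj {R : Type*} [Ring R] (hG : G.IsTree) (u : V)
    {x y : V} (h : G.Adj x y) : (-1 : R) ^ G.dist u y = -(-1) ^ G.dist u x := by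
  rcases hG.dist_eq_dist_add_one_of_adj u h with h' | h' <;> rw [h'] <;> simp [pow_succ]

theorem SimpleGraph.Connected.eq_or_adj_of_forall_adj_adj (hG : G.Connected) {a : V}
    (h : ∀ x y, G.Adj x y → G.Adj y a → x = a) (x : V) : x = a ∨ G.Adj x a := by
  obtain ⟨p⟩ := hG.preconnected x a
  induction p with
  | nil => exact Or.inl rfl
  | cons hxy p ih =>
    rcases ih h with rfl | hya
    · exact Or.inr hxy
    · exact Or.inl (h _ _ hxy hya)

theorem SimpleGraph.Connected.card_eq_two_and_adj [Fintype V] (hG : G.Connected) {a b : V}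
    (hab : a ≠ b) (ha : ∀ x y, G.Adj x y → G.Adj y a → x = a)
    (hb : ∀ x y, G.Adj x y → G.Adj y b → x = b) : Fintype.card V = 2 ∧ G.Adj a b := by
  have hba : G.Adj b a := (hG.eq_or_adj_of_forall_adj_adj ha b).resolve_left hab.symm
  have hall : ∀ x, x = a ∨ x = b := fun x =>
    (hG.eq_or_adj_of_forall_adj_adj ha x).imp_right fun hxa => hb x a hxa hba.symm
  refine ⟨?_, hba.symm⟩
  classical
  rw [← Finset.card_univ, Finset.card_eq_two]
  exact ⟨a, b, hab, by ext x; simpa using hall x⟩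

end Graph

section NormalizedLaplacian

variable {V : Type*} [Fintype V] [DecidableEq V] (G : SimpleGraph V) [DecidableRel G.Adj]

theorem normLap_isSymm : (normLap G).IsSymm := by
  simp only [IsSymm, normLap, transpose_mul, diagonal_transpose, transpose_sub,
    SimpleGraph.transpose_adjMatrix, Matrix.mul_assoc]

noncomputable def normAdj : Matrix V V ℝ :=
  diagonal (fun v => (√(G.degree v))⁻¹) * G.adjMatrix ℝ * diagonal (fun v => (√(G.degree v))⁻¹)

theorem normAdj_apply (x y : V) :
    normAdj G x y = if G.Adj x y then (√(G.degree x))⁻¹ * (√(G.degree y))⁻¹ else 0 := by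
  rw [normAdj, mul_diagonal, diagonal_mul, SimpleGraph.adjMatrix_apply]
  split_ifs <;> simp

theorem normLap_eq_one_sub_normAdj (hdeg : ∀ x, 0 < G.degree x) : normLap G = 1 - normAdj G := by
  rw [normLap, normAdj, Matrix.mul_sub, Matrix.sub_mul, diagonal_mul_diagonal,
    diagonal_mul_diagonal, ← diagonal_one]
  congr 2
  ext x
  have hd : (0 : ℝ) < G.degree x := mod_cast hdeg x
  field_simp
  rw [Real.sq_sqrt hd.le]

theorem normAdj_mulVec_mul_of_adj {σ : V → ℝ} (hσ : ∀ x y, G.Adj x y → σ y = -σ x)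
    (v : V → ℝ) : normAdj G *ᵥ (σ * v) = -(σ * (normAdj G *ᵥ v)) := by
  ext x
  simp only [mulVec, dotProduct, Pi.mul_apply, Pi.neg_apply, Finset.mul_sum,
    ← Finset.sum_neg_distrib]
  refine Finset.sum_congr rfl fun y _ => ?_
  rw [normAdj_apply]
  split_ifs with hxy
  · rw [hσ x y hxy]; ring
  · simp

variable {G}

theorem PST.stronglyCospectral {a b : V} {τ : ℝ} (h : PST G a b τ) :
    StronglyCospectral (normLap G) a b := by
  obtain ⟨γ, hγ, hU⟩ := h
  refine stronglyCospectral_of_phase (fun θ => Complex.exp (Complex.I * τ * θ)) (fun θ => ?_) hγ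
    fun θ v hv => (normLap_isSymm G).cexp_mul_apply_eq_of_exp_mulVec_single hU hv
  rw [mul_assoc, mul_comm, ← Complex.ofReal_mul, Complex.norm_exp_ofReal_mul_I]

theorem normLap_mulVec_mul_of_adj (hdeg : ∀ x, 0 < G.degree x) {σ : V → ℝ}
    (hσ : ∀ x y, G.Adj x y → σ y = -σ x) {θ : ℝ} {v : V → ℝ} (hv : normLap G *ᵥ v = θ • v) :
    normLap G *ᵥ (σ * v) = (2 - θ) • (σ * v) := by
  rw [normLap_eq_one_sub_normAdj G hdeg] at hv ⊢
  have hN : normAdj G *ᵥ v = (1 - θ) • v := by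
    rw [sub_mulVec, one_mulVec] at hv
    rw [sub_smul, one_smul, ← hv, sub_sub_cancel]
  rw [sub_mulVec, one_mulVec, normAdj_mulVec_mul_of_adj G hσ, hN]
  ext x
  simp only [Pi.sub_apply, Pi.neg_apply, Pi.mul_apply, Pi.smul_apply, smul_eq_mul]
  ring

theorem Splus.sminus_two_sub (hdeg : ∀ x, 0 < G.degree x) {σ : V → ℝ}
    (hσ : ∀ x y, G.Adj x y → σ y = -σ x) {a b : V} (hσa : σ a = 1) (hσb : σ b = -1)
    (hsc : StronglyCospectral (normLap G) a b) {θ : ℝ} (h : Splus (normLap G) a b θ) :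
    Sminus (normLap G) a b (2 - θ) := by
  obtain ⟨⟨v, -, hv, hva⟩, hvab⟩ := h
  have hσv := normLap_mulVec_mul_of_adj hdeg hσ hv
  have hσva : (σ * v) a ≠ 0 := by simpa [hσa] using hva
  refine ⟨⟨σ * v, fun h0 => hσva (by rw [h0]; rfl), hσv, hσva⟩, ?_⟩
  refine (hsc (2 - θ)).resolve_left fun hplus => hva ?_
  have := hplus _ hσv
  simp only [Pi.mul_apply, hσa, hσb, one_mul, neg_one_mul, ← hvab v hv] at this
  linarith

theorem inSupport_normLap_of_sminus_eq_two (hdeg : ∀ x, 0 < G.degree x) {σ : V → ℝ}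
    (hσ : ∀ x y, G.Adj x y → σ y = -σ x) {a b : V} (hσa : σ a = 1) (hσb : σ b = -1)
    (hsc : StronglyCospectral (normLap G) a b)
    (hS : ∀ θ, Sminus (normLap G) a b θ → θ = 2) {θ : ℝ} (hθ : inSupport (normLap G) a θ) :
    θ = 0 ∨ θ = 2 := by
  rcases hsc θ with hplus | hminus
  · left
    linarith [hS _ (Splus.sminus_two_sub hdeg hσ hσa hσb hsc ⟨hθ, hplus⟩)]
  · exact Or.inr (hS θ ⟨hθ, hminus⟩)

theorem normAdj_mul_self_apply_pos (hdeg : ∀ x, 0 < G.degree x) {x y z : V} (hxy : G.Adj x y)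
    (hyz : G.Adj y z) : 0 < (normAdj G * normAdj G) x z := by
  have hpos : ∀ w, 0 < (√(G.degree w : ℝ))⁻¹ := fun w => by
    have : (0 : ℝ) < G.degree w := mod_cast hdeg w
    positivity
  have hnonneg : ∀ u w, 0 ≤ normAdj G u w := fun u w => by
    rw [normAdj_apply]
    split_ifs
    exacts [(mul_pos (hpos u) (hpos w)).le, le_rfl]
  rw [mul_apply]
  refine Finset.sum_pos' (fun w _ => mul_nonneg (hnonneg x w) (hnonneg w z))
    ⟨y, Finset.mem_univ _, ?_⟩
  rw [normAdj_apply, normAdj_apply, if_pos hxy, if_pos hyz]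
  exact mul_pos (mul_pos (hpos x) (hpos y)) (mul_pos (hpos y) (hpos z))

theorem eq_of_adj_of_adj_of_inSupport_normLap (hdeg : ∀ x, 0 < G.degree x) {a : V}
    (hsupp : ∀ θ, inSupport (normLap G) a θ → θ = 0 ∨ θ = 2) {x y : V} (hxy : G.Adj x y)
    (hya : G.Adj y a) : x = a := by
  by_contra hx
  have hN2 := (isHermitian_iff_isSymm.2 (normLap_isSymm G)).aeval_mulVec_single_eq_zero
    (p := (X * (X - C 2) : ℝ[X])) fun θ hθ => by rcases hsupp θ hθ with rfl | rfl <;> simp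
  have hpoly : aeval (normLap G) (X * (X - C 2) : ℝ[X]) = normAdj G * normAdj G - 1 := by
    rw [normLap_eq_one_sub_normAdj G hdeg]
    simp only [map_mul, map_sub, aeval_X, aeval_C, Algebra.algebraMap_eq_smul_one, two_smul]
    noncomm_ring
  rw [hpoly] at hN2
  have := congrFun hN2 x
  simp [hx] at this
  exact (normAdj_mul_self_apply_pos hdeg hxy hya).ne' this

end NormalizedLaplacian

theorem tree_pst_diff_class_Sminus_two_general {V : Type*} [Fintype V] [DecidableEq V]
    (G : SimpleGraph V) [DecidableRel G.Adj]
    (hG : G.IsTree)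
    (a b : V)
    (hpst : ∃ τ : ℝ, 0 < τ ∧ PST G a b τ)
    (hclass : Odd (G.dist a b))
    (hS : ∀ θ : ℝ, Sminus (normLap G) a b θ ↔ θ = 2) :
    Fintype.card V = 2 ∧ G.Adj a b := by
  obtain ⟨τ, -, hτ⟩ := hpst
  have hab : a ≠ b := by rintro rfl; simp at hclass
  have : Nontrivial V := nontrivial_of_ne a b hab
  have hdeg : ∀ x, 0 < G.degree x := fun x =>
    (G.degree_pos x).2 (hG.connected.preconnected.not_isIsolated x)
  have hsc := hτ.stronglyCospectral
  have hsupp : ∀ θ, inSupport (normLap G) a θ → θ = 0 ∨ θ = 2 := fun θ =>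
    inSupport_normLap_of_sminus_eq_two hdeg (σ := fun x => (-1 : ℝ) ^ G.dist a x)
      (fun _ _ => hG.neg_one_pow_dist_of_adj a) (by simp) hclass.neg_one_pow hsc fun θ => (hS θ).1
  exact hG.connected.card_eq_two_and_adj hab
    (fun _ _ => eq_of_adj_of_adj_of_inSupport_normLap hdeg hsupp)
    (fun _ _ => eq_of_adj_of_adj_of_inSupport_normLap hdeg
      fun θ hθ => hsupp θ (hsc.inSupport_of_inSupport_right hθ))

/-- if a tree admits perfect state transfer between vertices in different
bipartite classes and `S⁻ = {2}`, then the tree is the path on two vertices. -/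
theorem tree_pst_diff_class_Sminus_two {V : Type*} [Fintype V] [DecidableEq V]
    (G : SimpleGraph V) [DecidableRel G.Adj]
    (hG : G.IsTree) (hcard : 2 ≤ Fintype.card V)
    (a b : V) (hab : a ≠ b)
    (hpst : ∃ τ : ℝ, 0 < τ ∧ PST G a b τ)
    (hclass : Odd (G.dist a b))
    (hS : ∀ θ : ℝ, Sminus (normLap G) a b θ ↔ θ = 2) :
    Fintype.card V = 2 ∧ G.Adj a b :=
  tree_pst_diff_class_Sminus_two_general G hG a b hpst hclass hS
end
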